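/- Let φ₀ ∈ M be a local minimizer or a local maximizer of E restricted to M (i.e. there is a neighborhood U of φ₀ in X such that E(φ₀) ≤ E(φ) for all φ ∈ M ∩ U, or E(φ₀) ≥ E(φ) for all φ ∈ M ∩ U). If φ₀ ∉ M⁰, then φ₀ is a critical point of E, i.e. the Fréchet derivative E'(φ₀) is the zero functional on X. -/

import Mathlib

/-!
Near `φ₀ ≠ 0` the Nehari manifold coincides with the level set `{I = I φ₀}`, so `φ₀` is a local
extremum of `E` on that level set and the Lagrange multiplier rule gives `a • I'(φ₀) + b • E'(φ₀) = 0`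
with `(a, b) ≠ 0`. Evaluating at `φ₀`, where `E'(φ₀)(φ₀) = I(φ₀) = 0` and `I'(φ₀)(φ₀) ≠ 0`,
forces `a = 0`, hence `b ≠ 0` and `E'(φ₀) = 0`.
-/

open Filter Topology

lemma isLocalExtrOn_of_exists_mem_nhds {X : Type*} [TopologicalSpace X] {f : X → ℝ} {s : Set X}
    {a : X} (h : ∃ U ∈ 𝓝 a, (∀ y ∈ s ∩ U, f a ≤ f y) ∨ (∀ y ∈ s ∩ U, f y ≤ f a)) :
    IsLocalExtrOn f s a := by
  obtain ⟨U, hU, hmin | hmax⟩ := h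
  · exact Or.inl <| mem_of_superset (inter_mem_nhdsWithin s hU) hmin
  · exact Or.inr <| mem_of_superset (inter_mem_nhdsWithin s hU) hmax

lemma IsLocalExtrOn.of_inter_mem_nhds {X : Type*} [TopologicalSpace X] {f : X → ℝ}
    {s t : Set X} {a : X} (hf : IsLocalExtrOn f (s ∩ t) a) (hs : s ∈ 𝓝 a) :
    IsLocalExtrOn f t a := by
  rwa [IsLocalExtrOn, nhdsWithin_inter_of_mem (mem_nhdsWithin_of_mem_nhds hs)] at hf

lemma IsLocalExtrOn.eq_zero_of_hasStrictFDerivAt_of_transversal {X : Type*} [NormedAddCommGroup X]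
    [NormedSpace ℝ X] [CompleteSpace X] {f g : X → ℝ} {f' g' : StrongDual ℝ X} {x v : X}
    (hextr : IsLocalExtrOn f {y | g y = g x} x) (hf : HasStrictFDerivAt f f' x)
    (hg : HasStrictFDerivAt g g' x) (hfv : f' v = 0) (hgv : g' v ≠ 0) : f' = 0 := by
  obtain ⟨a, b, hab, hcomb⟩ := hextr.exists_multipliers_of_hasStrictFDerivAt_1d hg hf
  have hcomb_v : a * g' v + b * f' v = 0 := by
    simpa using congrArg (fun L : StrongDual ℝ X => L v) hcomb
  have ha : a = 0 := by
    rw [hfv, mul_zero, add_zero] at hcomb_v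
    exact (mul_eq_zero.1 hcomb_v).resolve_right hgv
  have hb : b ≠ 0 := fun hb => hab (by simp [ha, hb])
  rw [ha, zero_smul, zero_add] at hcomb
  exact (smul_eq_zero.1 hcomb).resolve_left hb

/-- If `φ₀` is a local minimizer or local maximizer of a `C¹` functional `E` restricted to the
Nehari manifold `M = {φ ≠ 0 : I(φ) = 0}` (where `I(φ) = E'(φ)(φ)`) and `φ₀` does not lie in the
degenerate set `M⁰ = {φ ∈ M : I'(φ)(φ) = 0}`, then `φ₀` is a critical point of `E`. -/
theorem statement_6 {X : Type*} [NormedAddCommGroup X] [NormedSpace ℝ X] [CompleteSpace X]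
    (E : X → ℝ) (hE : ContDiff ℝ 1 E)
    (I : X → ℝ) (hIdef : ∀ φ : X, I φ = fderiv ℝ E φ φ)
    (hI : ContDiff ℝ 1 I)
    (M : Set X) (hM : M = {φ : X | φ ≠ 0 ∧ I φ = 0})
    (M0 : Set X) (hM0 : M0 = {φ ∈ M | fderiv ℝ I φ φ = 0})
    (φ₀ : X) (hφ₀ : φ₀ ∈ M)
    (hloc : ∃ U ∈ nhds φ₀,
      (∀ φ ∈ M ∩ U, E φ₀ ≤ E φ) ∨ (∀ φ ∈ M ∩ U, E φ ≤ E φ₀))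
    (hnotdeg : φ₀ ∉ M0) :
    fderiv ℝ E φ₀ = 0 := by
  subst hM hM0
  obtain ⟨hne, hI0⟩ := hφ₀
  have hextr : IsLocalExtrOn E {φ | I φ = I φ₀} φ₀ := by
    have hM : {φ : X | φ ≠ 0 ∧ I φ = 0} = {0}ᶜ ∩ {φ | I φ = I φ₀} := by
      ext φ; simp [hI0]
    rw [hM] at hloc
    exact (isLocalExtrOn_of_exists_mem_nhds hloc).of_inter_mem_nhds
      (isOpen_compl_singleton.mem_nhds hne)
  exact hextr.eq_zero_of_hasStrictFDerivAt_of_transversal (v := φ₀)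
    (hE.contDiffAt.hasStrictFDerivAt one_ne_zero) (hI.contDiffAt.hasStrictFDerivAt one_ne_zero)
    (by rw [← hIdef, hI0]) (fun h => hnotdeg ⟨⟨hne, hI0⟩, h⟩)
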